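/- (Quadratic growth) Suppose X* ∈ F_{n,k} is an optimal solution of min_{X∈F_{n,k}} f(X) satisfying the eigen-gap assumption with parameter δ > 0. Then for every X ∈ F_{n,k}: ‖X − X*‖_F² ≤ (2/δ)·(f(X) − f(X*)). -/

import Mathlib

open Matrix

noncomputable def frobNorm {m : ℕ} (A : Matrix (Fin m) (Fin m) ℝ) : ℝ :=
  Real.sqrt (∑ i, ∑ j, (A i j) ^ 2)

/-- `eigval A j` is the `j`-th largest eigenvalue (1-indexed) of the symmetric matrix `A`. -/
noncomputable def eigval {m : ℕ} (A : Matrix (Fin m) (Fin m) ℝ) (j : ℕ) : ℝ :=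
  if h : A.IsHermitian then
    if hj : m - j < m then (h.eigenvalues ∘ Tuple.sort h.eigenvalues) ⟨m - j, hj⟩ else 0
  else 0

/-- spectral norm: largest singular value. -/
noncomputable def specNorm {m : ℕ} (A : Matrix (Fin m) (Fin m) ℝ) : ℝ :=
  Real.sqrt (eigval (Aᵀ * A) 1)

/-- `P_{n,k}`: rank-`k` orthogonal projection matrices. -/
def ProjSet (n k : ℕ) : Set (Matrix (Fin n) (Fin n) ℝ) :=
  {X | ∃ Q : Matrix (Fin n) (Fin k) ℝ, Qᵀ * Q = 1 ∧ X = Q * Qᵀ}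

/-- The Fantope `F_{n,k}`. -/
def Fantope (n k : ℕ) : Set (Matrix (Fin n) (Fin n) ℝ) :=
  {X | X.IsSymm ∧ X.PosSemidef ∧ (1 - X).PosSemidef ∧ X.trace = (k : ℝ)}

/-!
Let `G = ∇f(X*)` and let `P` be the orthogonal projection onto the eigenvectors of the `k`
smallest eigenvalues of `G`. In an eigenbasis of `G` the diagonal `y` of any `X ∈ F_{n,k}` lies in
`[0,1]ⁿ` and sums to `k`, so the eigen-gap gives `⟪G, X - P⟫ ≥ δ (k - ∑_{i ≤ k} yᵢ)`; and since
`‖X‖_F² = tr X² ≤ tr X = k`, also `‖X - P‖_F² ≤ 2 (k - ∑_{i ≤ k} yᵢ)`. Hence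
`⟪G, X - P⟫ ≥ δ/2 ‖X - P‖_F²` on the Fantope. The first-order optimality condition
`⟪G, P - X*⟫ ≥ 0` then forces `X* = P`, and the gradient inequality
`f X ≥ f X* + ⟪G, X - X*⟫` finishes the proof.
-/

open scoped Matrix.Norms.Frobenius

lemma frobNorm_eq_norm {m : ℕ} (A : Matrix (Fin m) (Fin m) ℝ) : frobNorm A = ‖A‖ := by
  simp [frobNorm, Matrix.frobenius_norm_def, Real.sqrt_eq_rpow]

namespace Matrix

variable {m n : Type*} [Fintype m] [Fintype n]

lemma frobenius_norm_sq_eq_trace (A : Matrix m n ℝ) : ‖A‖ ^ 2 = (A * Aᵀ).trace := by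
  rw [frobenius_norm_def, ← Real.sqrt_eq_rpow, Real.sq_sqrt (by positivity)]
  simp [trace, mul_apply, sq]

lemma frobenius_norm_transpose_mul_mul [DecidableEq n] {U : Matrix n n ℝ} (hU : U * Uᵀ = 1)
    (A : Matrix n n ℝ) : ‖Uᵀ * A * U‖ = ‖A‖ := by
  rw [← sq_eq_sq₀ (norm_nonneg _) (norm_nonneg _), frobenius_norm_sq_eq_trace,
    frobenius_norm_sq_eq_trace]
  simp only [transpose_mul, transpose_transpose, Matrix.mul_assoc]
  rw [← Matrix.mul_assoc U, hU, Matrix.one_mul, trace_mul_comm]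
  simp only [Matrix.mul_assoc, hU, Matrix.mul_one]

lemma trace_diagonal_mul [DecidableEq n] (μ : n → ℝ) (X : Matrix n n ℝ) :
    (diagonal μ * X).trace = ∑ i, μ i * X i i := by
  simp [trace, diagonal_mul]

lemma PosSemidef.trace_mul_nonneg {A B : Matrix n n ℝ} (hA : A.PosSemidef) (hB : B.PosSemidef) :
    0 ≤ (A * B).trace := by
  classical
  open scoped MatrixOrder Matrix.Norms.L2Operator in
  obtain ⟨C, rfl⟩ := CStarAlgebra.nonneg_iff_eq_star_mul_self.mp hA.nonneg
  rw [Matrix.mul_assoc, trace_mul_comm, Matrix.mul_assoc, ← Matrix.mul_assoc,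
    star_eq_conjTranspose]
  exact (hB.mul_mul_conjTranspose_same C).trace_nonneg

lemma PosSemidef.transpose_mul_mul_same {A : Matrix n n ℝ} (hA : A.PosSemidef)
    (B : Matrix n n ℝ) : (Bᵀ * A * B).PosSemidef := by
  simpa using hA.conjTranspose_mul_mul_same B

lemma IsHermitian.exists_orthogonal_diagonalization [DecidableEq n] {G : Matrix n n ℝ}
    (hG : G.IsHermitian) :
    ∃ U : Matrix n n ℝ, U * Uᵀ = 1 ∧ G = U * diagonal hG.eigenvalues * Uᵀ := by
  set U : Matrix n n ℝ := (hG.eigenvectorUnitary : Matrix n n ℝ)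
  have hstar : star U = Uᵀ := by rw [star_eq_conjTranspose, conjTranspose_eq_transpose_of_trivial]
  refine ⟨U, hstar ▸ Unitary.coe_mul_star_self hG.eigenvectorUnitary, ?_⟩
  conv_lhs => rw [hG.spectral_theorem]
  simp [Unitary.conjStarAlgAut_apply, U, ← hstar]

open Filter Topology in
lemma trace_mul_sub_nonneg_of_isMinOn {s : Set (Matrix n n ℝ)} (hs : Convex ℝ s)
    {f : Matrix n n ℝ → ℝ} {grad : Matrix n n ℝ → Matrix n n ℝ}
    (hconv : ∀ X ∈ s, ∀ Y ∈ s, f X + (grad X * (Y - X)).trace ≤ f Y)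
    {X₀ : Matrix n n ℝ} (hX₀ : X₀ ∈ s) (hmin : IsMinOn f s X₀)
    (hcont : ContinuousWithinAt grad s X₀) {Y : Matrix n n ℝ} (hY : Y ∈ s) :
    0 ≤ (grad X₀ * (Y - X₀)).trace := by
  set Z : ℝ → Matrix n n ℝ := fun t => X₀ + t • (Y - X₀)
  have hZs : ∀ t ∈ Set.Ioc (0 : ℝ) 1, Z t ∈ s := fun t ht =>
    hs.add_smul_sub_mem hX₀ hY (Set.Ioc_subset_Icc_self ht)
  have hslope : ∀ t ∈ Set.Ioc (0 : ℝ) 1, 0 ≤ (grad (Z t) * (Y - X₀)).trace := by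
    intro t ht
    have h := hconv (Z t) (hZs t ht) X₀ hX₀
    have hback : X₀ - Z t = (-t) • (Y - X₀) := by simp [Z]
    rw [hback, Matrix.mul_smul, trace_smul, smul_eq_mul] at h
    have hmin_t := isMinOn_iff.mp hmin _ (hZs t ht)
    exact (mul_nonneg_iff_of_pos_left ht.1).mp (by linarith)
  have hZ : Tendsto Z (𝓝[>] 0) (𝓝[s] X₀) := by
    refine tendsto_nhdsWithin_iff.mpr ⟨?_, eventually_of_mem (Ioc_mem_nhdsGT one_pos) hZs⟩
    have hcontZ : Continuous Z := continuous_const.add (continuous_id.smul continuous_const)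
    simpa [Z] using (hcontZ.tendsto 0).mono_left nhdsWithin_le_nhds
  have hlim : Tendsto (fun t => (grad (Z t) * (Y - X₀)).trace) (𝓝[>] 0)
      (𝓝 (grad X₀ * (Y - X₀)).trace) :=
    ((continuous_id.matrix_mul continuous_const).matrix_trace.tendsto _).comp
      (hcont.tendsto.comp hZ)
  exact ge_of_tendsto hlim (eventually_of_mem (Ioc_mem_nhdsGT one_pos) hslope)

end Matrix

section Fantope

variable {n k : ℕ}

lemma convex_fantope : Convex ℝ (Fantope n k) := by
  rintro X ⟨hXs, hX, hX1, hXtr⟩ Y ⟨hYs, hY, hY1, hYtr⟩ a b ha hb hab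
  refine ⟨?_, (hX.smul ha).add (hY.smul hb), ?_, ?_⟩
  · simp [IsSymm, hXs.eq, hYs.eq]
  · have : 1 - (a • X + b • Y) = a • (1 - X) + b • (1 - Y) := by
      conv_lhs => rw [← one_smul ℝ (1 : Matrix (Fin n) (Fin n) ℝ), ← hab, add_smul]
      simp only [smul_sub]
      abel
    rw [this]
    exact (hX1.smul ha).add (hY1.smul hb)
  · simp [hXtr, hYtr, ← add_mul, hab]

lemma transpose_mul_mul_mem_fantope {U X : Matrix (Fin n) (Fin n) ℝ} (hU : U * Uᵀ = 1)
    (hX : X ∈ Fantope n k) : Uᵀ * X * U ∈ Fantope n k := by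
  obtain ⟨hXs, hX, hX1, hXtr⟩ := hX
  refine ⟨?_, hX.transpose_mul_mul_same U, ?_, ?_⟩
  · simp [IsSymm, hXs.eq, Matrix.mul_assoc]
  · have : 1 - Uᵀ * X * U = Uᵀ * (1 - X) * U := by
      rw [Matrix.mul_sub, Matrix.sub_mul, Matrix.mul_one, mul_eq_one_comm.mp hU]
    rw [this]
    exact hX1.transpose_mul_mul_same U
  · rw [trace_mul_comm, ← Matrix.mul_assoc, hU, Matrix.one_mul, hXtr]

lemma diag_mem_Icc_of_mem_fantope {X : Matrix (Fin n) (Fin n) ℝ} (hX : X ∈ Fantope n k)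
    (i : Fin n) : X i i ∈ Set.Icc 0 1 := by
  have := hX.2.2.1.diag_nonneg (i := i)
  simp only [Matrix.sub_apply, one_apply_eq, sub_nonneg] at this
  exact ⟨hX.2.1.diag_nonneg, this⟩

lemma trace_mul_self_le_of_mem_fantope {X : Matrix (Fin n) (Fin n) ℝ} (hX : X ∈ Fantope n k) :
    (X * X).trace ≤ k := by
  have := hX.2.1.trace_mul_nonneg hX.2.2.1
  rw [Matrix.mul_sub, Matrix.mul_one, trace_sub, hX.2.2.2] at this
  linarith

end Fantope

section CoordProj

variable {ι : Type*} [DecidableEq ι]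

def coordProj (S : Finset ι) : Matrix ι ι ℝ :=
  diagonal fun i => if i ∈ S then 1 else 0

lemma coordProj_posSemidef (S : Finset ι) : (coordProj S).PosSemidef :=
  PosSemidef.diagonal fun i => by split_ifs <;> norm_num

variable [Fintype ι]

lemma one_sub_coordProj (S : Finset ι) : 1 - coordProj S = coordProj Sᶜ := by
  ext i j
  by_cases h : i = j
  · subst h
    by_cases hi : i ∈ S <;> simp [coordProj, hi]
  · simp [coordProj, h]

lemma trace_mul_coordProj (S : Finset ι) (X : Matrix ι ι ℝ) :
    (X * coordProj S).trace = ∑ i ∈ S, X i i := by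
  simp [coordProj, trace, mul_diagonal, Finset.sum_ite_mem]

lemma trace_diagonal_mul_coordProj (μ : ι → ℝ) (S : Finset ι) :
    (diagonal μ * coordProj S).trace = ∑ i ∈ S, μ i := by
  simp [trace_mul_coordProj]

lemma coordProj_mem_fantope {n : ℕ} (S : Finset (Fin n)) : coordProj S ∈ Fantope n S.card := by
  refine ⟨isSymm_diagonal _, coordProj_posSemidef S, ?_, ?_⟩
  · rw [one_sub_coordProj]
    exact coordProj_posSemidef _
  · simp [coordProj, trace_diagonal]

open Finset in
lemma gap_mul_card_sub_sum_le {S : Finset ι} {μ y : ι → ℝ} {c δ : ℝ}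
    (hlow : ∀ i ∈ S, μ i ≤ c) (hhigh : ∀ i ∉ S, c + δ ≤ μ i)
    (hy : ∀ i, y i ∈ Set.Icc 0 1) (hsum : ∑ i, y i = #S) :
    δ * (#S - ∑ i ∈ S, y i) ≤ ∑ i, μ i * y i - ∑ i ∈ S, μ i := by
  have hin : ∑ i ∈ S, c * (y i - 1) ≤ ∑ i ∈ S, μ i * (y i - 1) :=
    sum_le_sum fun i hi => mul_le_mul_of_nonpos_right (hlow i hi) (by linarith [(hy i).2])
  have hout : ∑ i ∈ Sᶜ, (c + δ) * y i ≤ ∑ i ∈ Sᶜ, μ i * y i :=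
    sum_le_sum fun i hi => mul_le_mul_of_nonneg_right (hhigh i (mem_compl.mp hi)) (hy i).1
  have hy_split := sum_add_sum_compl S y
  have hμy_split := sum_add_sum_compl S fun i => μ i * y i
  simp only [mul_sub, sum_sub_distrib, ← mul_sum, mul_one, sum_const, nsmul_eq_mul] at hin hout
  -- summed, the bounds leave `δ ∑_{i ∉ S} y i`, and `∑_{i ∉ S} y i = #S - ∑_{i ∈ S} y i`
  linear_combination hin + hout + hμy_split - (c + δ) * (hy_split + hsum)

end CoordProj

section QuadraticGrowth

variable {n : ℕ} {S : Finset (Fin n)} {μ : Fin n → ℝ} {c δ : ℝ}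

lemma half_gap_mul_norm_sub_coordProj_sq_le (hδ : 0 ≤ δ) (hlow : ∀ i ∈ S, μ i ≤ c)
    (hhigh : ∀ i ∉ S, c + δ ≤ μ i) {X : Matrix (Fin n) (Fin n) ℝ} (hX : X ∈ Fantope n S.card) :
    δ / 2 * ‖X - coordProj S‖ ^ 2 ≤ (diagonal μ * (X - coordProj S)).trace := by
  have hnorm : ‖X - coordProj S‖ ^ 2 ≤ 2 * (S.card - ∑ i ∈ S, X i i) := by
    rw [frobenius_norm_sq_eq_trace, transpose_sub, hX.1.eq, (coordProj_mem_fantope S).1.eq,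
      Matrix.sub_mul, Matrix.mul_sub, Matrix.mul_sub, trace_sub, trace_sub, trace_sub,
      trace_mul_comm (coordProj S) X, trace_mul_coordProj, trace_mul_coordProj]
    have hDD : ∑ i ∈ S, coordProj S i i = S.card := by simp [coordProj]
    linarith [trace_mul_self_le_of_mem_fantope hX]
  have hgap := gap_mul_card_sub_sum_le hlow hhigh (diag_mem_Icc_of_mem_fantope hX) hX.2.2.2
  rw [Matrix.mul_sub, trace_sub, trace_diagonal_mul, trace_diagonal_mul_coordProj]
  linarith [mul_le_mul_of_nonneg_left hnorm hδ]

lemma half_gap_mul_norm_sub_sq_le_trace {U : Matrix (Fin n) (Fin n) ℝ} (hU : U * Uᵀ = 1)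
    (hδ : 0 ≤ δ) (hlow : ∀ i ∈ S, μ i ≤ c) (hhigh : ∀ i ∉ S, c + δ ≤ μ i)
    {X : Matrix (Fin n) (Fin n) ℝ} (hX : X ∈ Fantope n S.card) :
    δ / 2 * ‖X - U * coordProj S * Uᵀ‖ ^ 2
      ≤ (U * diagonal μ * Uᵀ * (X - U * coordProj S * Uᵀ)).trace := by
  have hU' : Uᵀ * U = 1 := mul_eq_one_comm.mp hU
  have hconj : Uᵀ * (X - U * coordProj S * Uᵀ) * U = Uᵀ * X * U - coordProj S := by
    simp only [Matrix.mul_sub, Matrix.sub_mul, ← Matrix.mul_assoc, hU', Matrix.one_mul]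
    simp only [Matrix.mul_assoc, hU', Matrix.mul_one]
  have htrace : (U * diagonal μ * Uᵀ * (X - U * coordProj S * Uᵀ)).trace
      = (diagonal μ * (Uᵀ * (X - U * coordProj S * Uᵀ) * U)).trace := by
    rw [Matrix.mul_assoc, Matrix.mul_assoc, trace_mul_comm]
    simp only [Matrix.mul_assoc]
  rw [← frobenius_norm_transpose_mul_mul hU, htrace, hconj]
  exact half_gap_mul_norm_sub_coordProj_sq_le hδ hlow hhigh (transpose_mul_mul_mem_fantope hU hX)

end QuadraticGrowth

open Finset in
lemma Matrix.IsHermitian.exists_split_of_eigval_gap {n k : ℕ} (hkn : k < n)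
    {G : Matrix (Fin n) (Fin n) ℝ} (hG : G.IsHermitian) {δ : ℝ} (hδ : 0 < δ)
    (hgap : δ ≤ eigval G (n - k) - eigval G (n - k + 1)) :
    ∃ S : Finset (Fin n), #S = k ∧ ∃ c : ℝ,
      (∀ i ∈ S, hG.eigenvalues i ≤ c) ∧ ∀ i ∉ S, c + δ ≤ hG.eigenvalues i := by
  set σ := Tuple.sort hG.eigenvalues
  set μ := hG.eigenvalues ∘ σ
  have hμ : Monotone μ := Tuple.monotone_sort hG.eigenvalues
  -- `eigval G j` is the `j`-th largest eigenvalue, i.e. entry `n - j` of the ascending `μ`.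
  have hupper : eigval G (n - k) = μ ⟨k, hkn⟩ := by
    rw [eigval, dif_pos hG, dif_pos (by omega)]
    congr
    omega
  have hlower : eigval G (n - k + 1) = μ ⟨k - 1, by omega⟩ := by
    rw [eigval, dif_pos hG, dif_pos (by omega)]
    congr 2
    omega
  set c := eigval G (n - k + 1)
  have hhigh : ∀ a : Fin n, k ≤ a → c + δ ≤ μ a := fun a ha => by
    linarith [hμ (show (⟨k, hkn⟩ : Fin n) ≤ a from ha)]
  have hlow_iff : ∀ a : Fin n, μ a ≤ c ↔ (a : ℕ) < k := fun a =>
    ⟨fun h => by by_contra ha; linarith [hhigh a (by omega)],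
      fun h => hlower ▸ hμ (show a ≤ ⟨k - 1, by omega⟩ from Fin.mk_le_mk.mpr (by omega))⟩
  refine ⟨({i | hG.eigenvalues i ≤ c} : Finset (Fin n)), ?_, c,
    fun i hi => (mem_filter.mp hi).2, fun i hi => ?_⟩
  · have hcard : #{i | hG.eigenvalues i ≤ c} = #{a : Fin n | (a : ℕ) < k} :=
      card_equiv σ.symm fun i => by simp [← hlow_iff, μ]
    rw [hcard, Fin.card_filter_val_lt, min_eq_right hkn.le]
  · obtain ⟨a, rfl⟩ := σ.surjective i
    exact hhigh a (not_lt.mp fun ha => hi (by simpa [μ] using (hlow_iff a).mpr ha))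

/-- The witness `P` is the projection onto the eigenvectors of the `k` smallest eigenvalues
of `G`. -/
lemma exists_mem_fantope_half_gap_mul_norm_sub_sq_le {n k : ℕ} (hkn : k < n)
    {G : Matrix (Fin n) (Fin n) ℝ} (hG : G.IsHermitian) {δ : ℝ} (hδ : 0 < δ)
    (hgap : δ ≤ eigval G (n - k) - eigval G (n - k + 1)) :
    ∃ P ∈ Fantope n k, ∀ X ∈ Fantope n k, δ / 2 * ‖X - P‖ ^ 2 ≤ (G * (X - P)).trace := by
  obtain ⟨S, rfl, c, hlow, hhigh⟩ := hG.exists_split_of_eigval_gap hkn hδ hgap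
  obtain ⟨U, hU, hGU⟩ := hG.exists_orthogonal_diagonalization
  refine ⟨U * coordProj S * Uᵀ, ?_, fun X hX => ?_⟩
  · have h := transpose_mul_mul_mem_fantope (U := Uᵀ)
      (by rwa [transpose_transpose, mul_eq_one_comm]) (coordProj_mem_fantope S)
    rwa [transpose_transpose] at h
  · rw [hGU]
    exact half_gap_mul_norm_sub_sq_le_trace hU hδ.le hlow hhigh hX

theorem stmt9_general {n k : ℕ} (hkn : k < n)
    (f : Matrix (Fin n) (Fin n) ℝ → ℝ)
    (grad : Matrix (Fin n) (Fin n) ℝ → Matrix (Fin n) (Fin n) ℝ)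
    (β : ℝ)
    (hgradSymm : ∀ X : Matrix (Fin n) (Fin n) ℝ, (grad X).IsSymm)
    (hconv : ∀ X Y : Matrix (Fin n) (Fin n) ℝ, X.IsSymm → Y.IsSymm →
      f X + (grad X * (Y - X)).trace ≤ f Y)
    (hsmooth : ∀ X Y : Matrix (Fin n) (Fin n) ℝ, X.IsSymm → Y.IsSymm →
      frobNorm (grad X - grad Y) ≤ β * frobNorm (X - Y))
    (Xstar : Matrix (Fin n) (Fin n) ℝ)
    (hXstarMem : Xstar ∈ Fantope n k)
    (hXstarOpt : ∀ X ∈ Fantope n k, f Xstar ≤ f X)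
    (δ : ℝ) (hδ : 0 < δ)
    (hgap : δ ≤ eigval (grad Xstar) (n - k) - eigval (grad Xstar) (n - k + 1))
    :
    ∀ X ∈ Fantope n k,
      frobNorm (X - Xstar) ^ 2 ≤ 2 / δ * (f X - f Xstar) := by
  intro X hX
  simp only [frobNorm_eq_norm] at hsmooth ⊢
  obtain ⟨P, hP, hgrowth⟩ := exists_mem_fantope_half_gap_mul_norm_sub_sq_le hkn
    (isHermitian_iff_isSymm.mpr (hgradSymm Xstar)) hδ hgap
  have hcont : ContinuousWithinAt grad (Fantope n k) Xstar :=
    (LipschitzOnWith.of_dist_le' fun X hX Y hY => by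
      simpa only [dist_eq_norm] using hsmooth X Y hX.1 hY.1).continuousOn Xstar hXstarMem
  have hfirst : 0 ≤ (grad Xstar * (P - Xstar)).trace :=
    trace_mul_sub_nonneg_of_isMinOn convex_fantope (fun X hX Y hY => hconv X Y hX.1 hY.1)
      hXstarMem (isMinOn_iff.mpr hXstarOpt) hcont hP
  obtain rfl : Xstar = P := by
    have hflip : (grad Xstar * (Xstar - P)).trace = -(grad Xstar * (P - Xstar)).trace := by
      rw [← trace_neg, ← Matrix.mul_neg, neg_sub]
    have h : δ / 2 * ‖Xstar - P‖ ^ 2 ≤ 0 := by linarith [hgrowth Xstar hXstarMem]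
    rw [← sub_eq_zero, ← norm_eq_zero, ← sq_eq_zero_iff]
    exact le_antisymm (nonpos_of_mul_nonpos_right h (by positivity)) (sq_nonneg _)
  have hgrowthX := hgrowth X hX
  have hconvX := hconv Xstar X hXstarMem.1 hX.1
  rw [div_mul_eq_mul_div, le_div_iff₀ hδ]
  linarith

theorem stmt9 {n k : ℕ} (hk : 0 < k) (hkn : k < n)
    (f : Matrix (Fin n) (Fin n) ℝ → ℝ)
    (grad : Matrix (Fin n) (Fin n) ℝ → Matrix (Fin n) (Fin n) ℝ)
    (β : ℝ) (hβ : 0 < β)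
    (hgradSymm : ∀ X : Matrix (Fin n) (Fin n) ℝ, (grad X).IsSymm)
    (hconv : ∀ X Y : Matrix (Fin n) (Fin n) ℝ, X.IsSymm → Y.IsSymm →
      f X + (grad X * (Y - X)).trace ≤ f Y)
    (hsmooth : ∀ X Y : Matrix (Fin n) (Fin n) ℝ, X.IsSymm → Y.IsSymm →
      frobNorm (grad X - grad Y) ≤ β * frobNorm (X - Y))
    (Xstar : Matrix (Fin n) (Fin n) ℝ)
    (hXstarMem : Xstar ∈ Fantope n k)
    (hXstarOpt : ∀ X ∈ Fantope n k, f Xstar ≤ f X)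
    (δ : ℝ) (hδ : 0 < δ)
    (hgap : δ ≤ eigval (grad Xstar) (n - k) - eigval (grad Xstar) (n - k + 1))
    :
    ∀ X ∈ Fantope n k,
      frobNorm (X - Xstar) ^ 2 ≤ 2 / δ * (f X - f Xstar) :=
  stmt9_general hkn f grad β hgradSymm hconv hsmooth Xstar hXstarMem hXstarOpt δ hδ hgap
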